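/- Let τ be the cyclic permutation b ↦ c ↦ d ↦ b of {b,c,d}. For each ξ ∈ {b,c,d}, the function [ξ] : G → 𝔽₂ defined recursively by [ξ](g) = 1 if g = ξ; [ξ](g) = 0 if g ∈ {1,a,b,c,d} but g ≠ ξ; and [ξ](g) = [ξ^τ](g|₀) + [ξ^τ](g|₁) otherwise, is well-defined (the recursion terminates for every g ∈ G) and is a group homomorphism from G to the additive group of the field 𝔽₂ with two elements. -/

import Mathlib

open Equiv

/-! ## The binary rooted tree and the twisted twin of the Grigorchuk group

We identify the vertex set of the infinite rooted binary tree with `V = List Bool`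
(the free monoid `X*` on `X = {0,1}`), and realize automorphisms of the tree as
permutations of `V`.  The generators `a, b, c, d` of the twisted twin `G` of the
Grigorchuk group are defined by the recursive rules
`a(xw) = (¬x)w`, `ψ(b) = (c,a)`, `ψ(c) = (a,d)`, `ψ(d) = (1,b)`. -/

abbrev V : Type := List Bool

def actA : V → V
  | [] => []
  | x :: w => (!x) :: w

theorem actA_invol : Function.Involutive actA := fun w => by
  cases w with
  | nil => rfl
  | cons x w => simp [actA]

mutual
  def actB : V → V
    | [] => []
    | false :: w => false :: actC w
    | true :: w => true :: actA w
  def actC : V → V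
    | [] => []
    | false :: w => false :: actA w
    | true :: w => true :: actD w
  def actD : V → V
    | [] => []
    | false :: w => false :: w
    | true :: w => true :: actB w
end

theorem act_invol3 (w : V) :
    actB (actB w) = w ∧ actC (actC w) = w ∧ actD (actD w) = w := by
  induction w with
  | nil => exact ⟨rfl, rfl, rfl⟩
  | cons x w ih =>
    cases x <;>
      exact ⟨by simp [actB, actC, actD, ih.1, ih.2.1, ih.2.2, actA_invol w],
        by simp [actB, actC, actD, ih.1, ih.2.1, ih.2.2, actA_invol w],
        by simp [actB, actC, actD, ih.1, ih.2.1, ih.2.2, actA_invol w]⟩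

theorem actB_invol : Function.Involutive actB := fun w => (act_invol3 w).1
theorem actC_invol : Function.Involutive actC := fun w => (act_invol3 w).2.1
theorem actD_invol : Function.Involutive actD := fun w => (act_invol3 w).2.2

/-- The generator `a`: the root swap. -/
def a : Perm V := actA_invol.toPerm actA
/-- The generator `b`, with `ψ(b) = (c, a)`. -/
def b : Perm V := actB_invol.toPerm actB
/-- The generator `c`, with `ψ(c) = (a, d)`. -/
def c : Perm V := actC_invol.toPerm actC
/-- The generator `d`, with `ψ(d) = (1, b)`. -/
def d : Perm V := actD_invol.toPerm actD

@[simp] theorem coe_a : ⇑a = actA := rfl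
@[simp] theorem coe_b : ⇑b = actB := rfl
@[simp] theorem coe_c : ⇑c = actC := rfl
@[simp] theorem coe_d : ⇑d = actD := rfl

/-- The twisted twin of the Grigorchuk group. -/
def G : Subgroup (Perm V) := Subgroup.closure {a, b, c, d}

theorem a_mem_G : a ∈ G := Subgroup.subset_closure (by simp)
theorem b_mem_G : b ∈ G := Subgroup.subset_closure (by simp)
theorem c_mem_G : c ∈ G := Subgroup.subset_closure (by simp)
theorem d_mem_G : d ∈ G := Subgroup.subset_closure (by simp)

/-- `hasState g v s` says that the state (section) of `g` at the vertex `v` is `s`,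
i.e. `g (v ++ w) = g v ++ s w` for all `w`. -/
def hasState (g : Perm V) (v : V) (s : Perm V) : Prop :=
  ∀ w : V, g (v ++ w) = g v ++ s w

def vstarFun (v : V) (f : V → V) : V → V :=
  fun w => if v <+: w then v ++ f (w.drop v.length) else w

theorem vstarFun_comp (v : V) (f f' : V → V) (w : V) :
    vstarFun v f (vstarFun v f' w) = vstarFun v (f ∘ f') w := by
  by_cases h : v <+: w
  · obtain ⟨t, rfl⟩ := h
    simp [vstarFun, List.prefix_append, List.drop_left]
  · simp [vstarFun, h]

theorem vstarFun_id (v w : V) : vstarFun v id w = w := by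
  by_cases h : v <+: w
  · obtain ⟨t, rfl⟩ := h
    simp [vstarFun, List.prefix_append, List.drop_left]
  · simp [vstarFun, h]

/-- `vstar v g` is the automorphism `v * g`, acting as `g` on the subtree rooted
at `v` and trivially elsewhere. -/
def vstar (v : V) (g : Perm V) : Perm V where
  toFun := vstarFun v g
  invFun := vstarFun v g.symm
  left_inv := fun w => by
    rw [vstarFun_comp, Equiv.symm_comp_self]
    exact vstarFun_id v w
  right_inv := fun w => by
    rw [vstarFun_comp, Equiv.self_comp_symm]
    exact vstarFun_id v w

/-- `XstarSub n H` is the subgroup `Xⁿ * H`: the product of the copies `v * H`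
over all vertices `v` of level `n` (equivalently, the subgroup they generate). -/
def XstarSub (n : ℕ) (H : Subgroup (Perm V)) : Subgroup (Perm V) :=
  Subgroup.closure {p | ∃ v : V, ∃ g : Perm V, v.length = n ∧ g ∈ H ∧ p = vstar v g}

/-- `pairPerm s₀ s₁ = ψ⁻¹(s₀, s₁)`: the first-level stabilizer element whose states
at the vertices `0` and `1` are `s₀` and `s₁`. -/
def pairPerm (s₀ s₁ : Perm V) : Perm V := vstar [false] s₀ * vstar [true] s₁

/-- The permutations fixing every vertex of level `n`. -/
def stabLevel (n : ℕ) : Subgroup (Perm V) where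
  carrier := {g : Perm V | ∀ v : V, v.length = n → g v = v}
  one_mem' := fun _ _ => rfl
  mul_mem' := by
    intro g h hg hh v hv
    show g (h v) = v
    rw [hh v hv, hg v hv]
  inv_mem' := by
    intro g hg v hv
    show g⁻¹ v = v
    conv_lhs => rw [← hg v hv]
    exact g.symm_apply_apply v

/-- The `n`-th level stabilizer `Stab_G(n)` of `G`. -/
def stabG (n : ℕ) : Subgroup (Perm V) := G ⊓ stabLevel n

/-- The commutator `[x, y] = x⁻¹ y⁻¹ x y` (paper convention). -/
def pc (x y : Perm V) : Perm V := x⁻¹ * y⁻¹ * x * y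
/-- Conjugation `xʸ = y⁻¹ x y`. -/
def cj (x y : Perm V) : Perm V := y⁻¹ * x * y

/-- The normal closure in `G` of a subset `S` of `G`. -/
def ncl (S : Set (Perm V)) : Subgroup (Perm V) :=
  Subgroup.closure {x | ∃ s ∈ S, ∃ g ∈ G, x = g⁻¹ * s * g}

/-- `K = ⟨[a,b],[b,c],[b,d],[c,d], bcd⟩^G`. -/
def K : Subgroup (Perm V) := ncl {pc a b, pc b c, pc b d, pc c d, b * c * d}

/-- The subgroup `[K, G]`. -/
def KG : Subgroup (Perm V) := ⁅K, G⁆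

/-- The subgroup `C`, generated by `[K,G]` and `[a,b][b,c]`. -/
def Csub : Subgroup (Perm V) := KG ⊔ Subgroup.closure {pc a b * pc b c}

/-- `γ_n(G)`, the `n`-th term of the lower central series of `G` (starting at `γ₁ = G`),
viewed as a subgroup of `Perm V`. -/
def gammaG (n : ℕ) : Subgroup (Perm V) :=
  Subgroup.map G.subtype (Subgroup.lowerCentralSeries (⊤ : Subgroup ↥G) (n - 1))


/-- The generators `b, c, d`, on which the cyclic permutation `τ` acts as `i ↦ i + 1`. -/
def genBCD : Fin 3 → Perm V := ![b, c, d]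

/-- The nucleus `N = {1, a, b, c, d}`. -/
def nucleus : Set (Perm V) := {1, a, b, c, d}

/-- The recursive specification of the functions `[ξ] : G → 𝔽₂` for `ξ ∈ {b,c,d}`:
`[ξ](g) = 1` if `g = ξ`; `[ξ](g) = 0` if `g ∈ N` but `g ≠ ξ`; and otherwise
`[ξ](g) = [ξ^τ](g|₀) + [ξ^τ](g|₁)`. -/
def XiSpec (F : Fin 3 → ↥G → ZMod 2) : Prop :=
  ∀ (i : Fin 3) (g : ↥G),
    ((g : Perm V) = genBCD i → F i g = 1) ∧
    ((g : Perm V) ∈ nucleus → (g : Perm V) ≠ genBCD i → F i g = 0) ∧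
    ((g : Perm V) ∉ nucleus →
      ∀ s₀ s₁ : ↥G, hasState ↑g [false] ↑s₀ → hasState ↑g [true] ↑s₁ →
        F i g = F (i + 1) s₀ + F (i + 1) s₁)

/-!
Write the elements of `G` as words in letters `A, B, C, D` standing for `a, b, c, d`; then `[ξ](g)`
is the parity of the number of occurrences of `ξ` in any word for `g`. Passing from a word to its
two states at the first level, each occurrence of `ξ` yields exactly one occurrence of `ξ^τ` in
one of them, so these parities satisfy the recursion. They are well defined because a word for `1`
contains each of `B, C, D` an even number of times; this, and the uniqueness of the solution of the
recursion, follow by induction along states, since a suitable potential of words strictly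
decreases when passing to a state, except on the words `Bⁿ` and `Dⁿ`, which represent elements of
the nucleus.
-/

namespace TwistedTwin

inductive Letter | A | B | C | D
  deriving DecidableEq

open Letter

def Letter.toPerm : Letter → Perm V
  | A => a | B => b | C => c | D => d

def Letter.act : Letter → Bool → Bool
  | A, x => !x
  | _, x => x

def Letter.state : Letter → Bool → List Letter
  | A, _ => []
  | B, false => [C] | B, true => [A]
  | C, false => [A] | C, true => [D]
  | D, false => [] | D, true => [B]

def wordPerm (w : List Letter) : Perm V := (w.map Letter.toPerm).prod

def wordAct : List Letter → Bool → Bool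
  | [], x => x
  | l :: w, x => l.act (wordAct w x)

def wordState : List Letter → Bool → List Letter
  | [], _ => []
  | l :: w, x => l.state (wordAct w x) ++ wordState w x

theorem Letter.toPerm_mul_self (l : Letter) : l.toPerm * l.toPerm = 1 := by
  cases l <;> ext v : 1 <;>
    simp [Letter.toPerm, actA_invol v, actB_invol v, actC_invol v, actD_invol v]

theorem Letter.toPerm_ne_one (l : Letter) : l.toPerm ≠ 1 := by
  intro h
  cases l
  · simpa [Letter.toPerm, actA] using Perm.ext_iff.1 h [false]
  · simpa [Letter.toPerm, actB, actA] using Perm.ext_iff.1 h [true, false]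
  · simpa [Letter.toPerm, actC, actA] using Perm.ext_iff.1 h [false, false]
  · simpa [Letter.toPerm, actD, actB, actA] using Perm.ext_iff.1 h [true, true, false]

theorem Letter.toPerm_pow (l : Letter) (n : ℕ) :
    l.toPerm ^ n = if Even n then 1 else l.toPerm := by
  induction n with
  | zero => simp
  | succ n ih =>
    by_cases h : Even n <;> simp [pow_succ, ih, h, Nat.even_add_one, l.toPerm_mul_self]

theorem Letter.toPerm_mem_G (l : Letter) : l.toPerm ∈ G := by
  cases l
  exacts [a_mem_G, b_mem_G, c_mem_G, d_mem_G]

theorem wordPerm_singleton (l : Letter) : wordPerm [l] = l.toPerm := by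
  simp [wordPerm]

theorem wordPerm_append (u v : List Letter) : wordPerm (u ++ v) = wordPerm u * wordPerm v := by
  simp [wordPerm]

theorem Letter.toPerm_inv (l : Letter) : l.toPerm⁻¹ = l.toPerm :=
  inv_eq_of_mul_eq_one_right l.toPerm_mul_self

theorem wordPerm_reverse (w : List Letter) : wordPerm w.reverse = (wordPerm w)⁻¹ := by
  simp [wordPerm, List.prod_inv_reverse, List.map_reverse, Function.comp_def, Letter.toPerm_inv]

theorem wordPerm_replicate (n : ℕ) (l : Letter) :
    wordPerm (List.replicate n l) = if Even n then 1 else l.toPerm := by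
  simp [wordPerm, List.prod_replicate, l.toPerm_pow]

theorem wordPerm_mem_G (w : List Letter) : wordPerm w ∈ G :=
  G.list_prod_mem <| by simpa using fun (l : Letter) _ => l.toPerm_mem_G

theorem exists_wordPerm_eq {g : Perm V} (hg : g ∈ G) : ∃ w, wordPerm w = g := by
  induction hg using Subgroup.closure_induction with
  | mem g hg =>
    simp only [Set.mem_insert_iff, Set.mem_singleton_iff] at hg
    rcases hg with rfl | rfl | rfl | rfl
    exacts [⟨[A], wordPerm_singleton A⟩, ⟨[B], wordPerm_singleton B⟩, ⟨[C], wordPerm_singleton C⟩,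
      ⟨[D], wordPerm_singleton D⟩]
  | one => exact ⟨[], rfl⟩
  | mul g h _ _ hg hh =>
    obtain ⟨u, rfl⟩ := hg
    obtain ⟨v, rfl⟩ := hh
    exact ⟨u ++ v, wordPerm_append u v⟩
  | inv g _ hg =>
    obtain ⟨u, rfl⟩ := hg
    exact ⟨u.reverse, wordPerm_reverse u⟩

theorem Letter.toPerm_cons (l : Letter) (x : Bool) (v : V) :
    l.toPerm (x :: v) = l.act x :: wordPerm (l.state x) v := by
  cases l <;> cases x <;>
    simp [Letter.toPerm, Letter.act, Letter.state, wordPerm, actA, actB, actC, actD]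

theorem wordPerm_cons (w : List Letter) (x : Bool) (v : V) :
    wordPerm w (x :: v) = wordAct w x :: wordPerm (wordState w x) v := by
  induction w with
  | nil => rfl
  | cons l w ih =>
    simp only [wordPerm, List.map_cons, List.prod_cons, Perm.mul_apply] at ih ⊢
    rw [ih, Letter.toPerm_cons, wordAct, wordState, List.map_append, List.prod_append,
      Perm.mul_apply]
    rfl

theorem wordPerm_apply_nil (w : List Letter) : wordPerm w [] = [] := by
  induction w with
  | nil => rfl
  | cons l w ih =>
    simp only [wordPerm, List.map_cons, List.prod_cons, Perm.mul_apply] at ih ⊢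
    rw [ih]
    cases l <;> rfl

theorem hasState_wordState (w : List Letter) (x : Bool) :
    hasState (wordPerm w) [x] (wordPerm (wordState w x)) := by
  intro v
  have hroot : wordPerm w [x] = [wordAct w x] := by
    simpa [wordPerm_apply_nil] using wordPerm_cons w x []
  rw [hroot, List.singleton_append, List.singleton_append, wordPerm_cons]

theorem _root_.hasState.unique {g s s' : Perm V} {v : V} (h : hasState g v s)
    (h' : hasState g v s') : s = s' :=
  Equiv.ext fun u => List.append_cancel_left ((h u).symm.trans (h' u))

theorem wordPerm_wordState_eq_one {w : List Letter} (h : wordPerm w = 1) (x : Bool) :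
    wordPerm (wordState w x) = 1 := by
  ext v : 1
  have hv := wordPerm_cons w x v
  rw [h] at hv
  exact (List.cons.inj hv).2.symm

theorem wordAct_not (w : List Letter) (x : Bool) : wordAct w (!x) = !wordAct w x := by
  induction w with
  | nil => rfl
  | cons l w ih => cases l <;> simp [wordAct, Letter.act, ih]

theorem wordAct_of_A_notMem {w : List Letter} (hA : A ∉ w) (x : Bool) : wordAct w x = x := by
  induction w with
  | nil => rfl
  | cons l w ih =>
    simp only [List.mem_cons, not_or] at hA
    cases l <;> simp_all [wordAct, Letter.act]

def letter : Fin 3 → Letter := ![B, C, D]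

theorem Letter.count_state (l : Letter) (i : Fin 3) (p : Bool) :
    (l.state p).count (letter (i + 1)) + (l.state !p).count (letter (i + 1)) =
      [l].count (letter i) := by
  cases l <;> revert i p <;> decide

theorem count_wordState (w : List Letter) (i : Fin 3) :
    (wordState w false).count (letter (i + 1)) + (wordState w true).count (letter (i + 1)) =
      w.count (letter i) := by
  induction w with
  | nil => rfl
  | cons l w ih =>
    have htrue : wordAct w true = !wordAct w false := wordAct_not w false
    rw [wordState, wordState, htrue, List.count_append, List.count_append,
      ← List.singleton_append, List.count_append, ← l.count_state i (wordAct w false)]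
    omega

def weight (w : List Letter) : ℕ := w.count B + w.count C + w.count D

theorem weight_append (u v : List Letter) : weight (u ++ v) = weight u + weight v := by
  simp only [weight, List.count_append]; ring

theorem countA_add_weight_wordState_le (w : List Letter) (x : Bool) :
    (wordState w x).count A + weight (wordState w x) ≤ weight w := by
  induction w with
  | nil => exact le_rfl
  | cons l w ih =>
    have hl : ∀ p, (l.state p).count A + weight (l.state p) ≤ weight [l] := by
      cases l <;> decide
    rw [wordState, List.count_append, weight_append, ← List.singleton_append, weight_append]
    have := hl (wordAct w x)
    omega

theorem weight_wordState_false_add_le {w : List Letter} (hA : A ∉ w) :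
    weight (wordState w false) + w.count C + w.count D ≤ weight w := by
  induction w with
  | nil => exact le_rfl
  | cons l w ih =>
    simp only [List.mem_cons, not_or] at hA
    rw [wordState, wordAct_of_A_notMem hA.2, weight_append, ← List.singleton_append,
      weight_append, List.count_append, List.count_append]
    have := ih hA.2
    have hl : weight (l.state false) + [l].count C + [l].count D ≤ weight [l] := by
      cases l <;> decide
    omega

theorem weight_wordState_true_add_le {w : List Letter} (hA : A ∉ w) :
    weight (wordState w true) + w.count B ≤ weight w := by
  induction w with
  | nil => exact le_rfl
  | cons l w ih =>
    simp only [List.mem_cons, not_or] at hA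
    rw [wordState, wordAct_of_A_notMem hA.2, weight_append, ← List.singleton_append,
      weight_append, List.count_append]
    have := ih hA.2
    have hl : weight (l.state true) + [l].count B ≤ weight [l] := by
      cases l <;> decide
    omega

theorem C_notMem_wordState_true {w : List Letter} (hA : A ∉ w) (hB : B ∉ w) :
    C ∉ wordState w true := by
  induction w with
  | nil => simp [wordState]
  | cons l w ih =>
    simp only [List.mem_cons, not_or] at hA hB
    rw [wordState, wordAct_of_A_notMem hA.2, List.mem_append, not_or]
    refine ⟨?_, ih hA.2 hB.2⟩
    cases l <;> simp_all [Letter.state]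

/-- The weight of a state never exceeds that of the word; when it is equal, the state has no `A`,
and for an `A`-free word which is not some `Bⁿ` or `Dⁿ` the state has no `C` while the word has. -/
def potential (w : List Letter) : ℕ :=
  4 * weight w + (if A ∈ w then 2 else 0) + (if C ∈ w then 1 else 0)

theorem potential_wordState_lt {w : List Letter} (hB : ∃ l ∈ w, l ≠ B) (hD : ∃ l ∈ w, l ≠ D)
    (x : Bool) : potential (wordState w x) < potential w := by
  have hle := countA_add_weight_wordState_le w x
  unfold potential
  by_cases hlt : weight (wordState w x) < weight w
  · split_ifs <;> omega
  have hAu : A ∉ wordState w x := List.count_eq_zero.1 (by omega)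
  by_cases hAw : A ∈ w
  · simp only [hAu, hAw, if_true, if_false]; split_ifs <;> omega
  cases x with
  | false =>
    have hle' := weight_wordState_false_add_le hAw
    have hCw : C ∉ w := List.count_eq_zero.1 (by omega)
    have hDw : D ∉ w := List.count_eq_zero.1 (by omega)
    obtain ⟨l, hl, hlB⟩ := hB
    cases l <;> simp_all
  | true =>
    have hle' := weight_wordState_true_add_le hAw
    have hBw : B ∉ w := List.count_eq_zero.1 (by omega)
    have hCu := C_notMem_wordState_true hAw hBw
    by_cases hCw : C ∈ w
    · simp only [hAu, hAw, hCu, hCw, if_true, if_false]; omega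
    obtain ⟨l, hl, hlD⟩ := hD
    cases l <;> simp_all

theorem wordState_induction {P : List Letter → Prop}
    (replicate : ∀ (l : Letter) (n : ℕ), P (List.replicate n l))
    (step : ∀ w, P (wordState w false) → P (wordState w true) → P w) (w : List Letter) :
    P w := by
  induction hw : potential w using Nat.strong_induction_on generalizing w with
  | _ n ih =>
  by_cases hB : ∀ l ∈ w, l = B
  · rw [List.eq_replicate_iff.2 ⟨rfl, hB⟩]; exact replicate B _
  by_cases hD : ∀ l ∈ w, l = D
  · rw [List.eq_replicate_iff.2 ⟨rfl, hD⟩]; exact replicate D _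
  push Not at hB hD
  exact step w (ih _ (hw ▸ potential_wordState_lt hB hD false) _ rfl)
    (ih _ (hw ▸ potential_wordState_lt hB hD true) _ rfl)

def parity (i : Fin 3) (w : List Letter) : ZMod 2 := (w.count (letter i) : ZMod 2)

theorem parity_append (i : Fin 3) (u v : List Letter) :
    parity i (u ++ v) = parity i u + parity i v := by
  simp [parity, List.count_append]

theorem parity_reverse (i : Fin 3) (w : List Letter) : parity i w.reverse = parity i w := by
  simp [parity, List.count_reverse]

theorem parity_wordState (i : Fin 3) (w : List Letter) :
    parity i w = parity (i + 1) (wordState w false) + parity (i + 1) (wordState w true) := by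
  rw [parity, parity, parity, ← Nat.cast_add, count_wordState]

theorem parity_eq_zero_of_wordPerm_eq_one {w : List Letter} (h : wordPerm w = 1) (i : Fin 3) :
    parity i w = 0 := by
  induction w using wordState_induction generalizing i with
  | replicate l n =>
    have hn : Even n := by
      by_contra hn
      rw [wordPerm_replicate, if_neg hn] at h
      exact l.toPerm_ne_one h
    simp only [parity, List.count_replicate]
    split_ifs
    exacts [ZMod.natCast_eq_zero_iff_even.2 hn, Nat.cast_zero]
  | step w ih₀ ih₁ =>
    rw [parity_wordState, ih₀ (wordPerm_wordState_eq_one h false),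
      ih₁ (wordPerm_wordState_eq_one h true), add_zero]

theorem parity_eq_of_wordPerm_eq {u v : List Letter} (h : wordPerm u = wordPerm v) (i : Fin 3) :
    parity i u = parity i v := by
  have h1 : wordPerm (u ++ v.reverse) = 1 := by
    rw [wordPerm_append, wordPerm_reverse, h, mul_inv_cancel]
  have := parity_eq_zero_of_wordPerm_eq_one h1 i
  rwa [parity_append, parity_reverse, CharTwo.add_eq_zero] at this

theorem mem_nucleus_iff {g : Perm V} : g ∈ nucleus ↔ g = 1 ∨ ∃ l : Letter, l.toPerm = g := by
  constructor
  · rintro (rfl | rfl | rfl | rfl | rfl)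
    exacts [.inl rfl, .inr ⟨A, rfl⟩, .inr ⟨B, rfl⟩, .inr ⟨C, rfl⟩, .inr ⟨D, rfl⟩]
  · rintro (rfl | ⟨l, rfl⟩)
    · simp [nucleus]
    · cases l <;> simp [nucleus, Letter.toPerm]

theorem wordPerm_letter (i : Fin 3) : wordPerm [letter i] = genBCD i := by
  fin_cases i <;> simp [wordPerm_singleton, letter, genBCD, Letter.toPerm]

theorem parity_of_wordPerm_eq_genBCD {w : List Letter} {i : Fin 3} (h : wordPerm w = genBCD i) :
    parity i w = 1 := by
  rw [parity_eq_of_wordPerm_eq (h.trans (wordPerm_letter i).symm)]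
  simp [parity]

theorem parity_of_wordPerm_mem_nucleus {w : List Letter} {i : Fin 3}
    (hN : wordPerm w ∈ nucleus) (hne : wordPerm w ≠ genBCD i) : parity i w = 0 := by
  rcases mem_nucleus_iff.1 hN with h | ⟨l, hl⟩
  · exact parity_eq_zero_of_wordPerm_eq_one h i
  · have hli : l ≠ letter i := by
      rintro rfl
      exact hne (by rw [← hl, ← wordPerm_letter, wordPerm_singleton])
    rw [parity_eq_of_wordPerm_eq (v := [l]) (by rw [wordPerm_singleton, hl])]
    simp [parity, hli]

noncomputable def xi (i : Fin 3) (g : G) : ZMod 2 := parity i (exists_wordPerm_eq g.2).choose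

theorem xi_eq_parity {g : G} {w : List Letter} (hw : wordPerm w = g) (i : Fin 3) :
    xi i g = parity i w :=
  parity_eq_of_wordPerm_eq ((exists_wordPerm_eq g.2).choose_spec.trans hw.symm) i

theorem xi_mul (i : Fin 3) (g h : G) : xi i (g * h) = xi i g + xi i h := by
  obtain ⟨u, hu⟩ := exists_wordPerm_eq g.2
  obtain ⟨v, hv⟩ := exists_wordPerm_eq h.2
  rw [xi_eq_parity (w := u ++ v) (by rw [wordPerm_append, hu, hv]; rfl), xi_eq_parity hu,
    xi_eq_parity hv, parity_append]

theorem xiSpec_xi : XiSpec xi := by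
  intro i g
  obtain ⟨w, hw⟩ := exists_wordPerm_eq g.2
  rw [xi_eq_parity hw]
  refine ⟨fun hg => parity_of_wordPerm_eq_genBCD (hw.trans hg),
    fun hN hg => parity_of_wordPerm_mem_nucleus (hw ▸ hN) (hw ▸ hg), fun _ s₀ s₁ h₀ h₁ => ?_⟩
  rw [← hw] at h₀ h₁
  rw [xi_eq_parity (h₀.unique (hasState_wordState w false)).symm,
    xi_eq_parity (h₁.unique (hasState_wordState w true)).symm, parity_wordState]

theorem _root_.XiSpec.apply_eq_parity_of_mem_nucleus {F : Fin 3 → G → ZMod 2} (hF : XiSpec F)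
    {g : G} {w : List Letter} (hw : wordPerm w = g) (hN : (g : Perm V) ∈ nucleus) (i : Fin 3) :
    F i g = parity i w := by
  by_cases hg : (g : Perm V) = genBCD i
  · rw [(hF i g).1 hg, parity_of_wordPerm_eq_genBCD (hw.trans hg)]
  · rw [(hF i g).2.1 hN hg, parity_of_wordPerm_mem_nucleus (hw ▸ hN) (hw ▸ hg)]

theorem _root_.XiSpec.apply_eq_parity {F : Fin 3 → G → ZMod 2} (hF : XiSpec F)
    {w : List Letter} {g : G} (hw : wordPerm w = g) (i : Fin 3) : F i g = parity i w := by
  induction w using wordState_induction generalizing g i with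
  | replicate l n =>
    refine hF.apply_eq_parity_of_mem_nucleus hw ?_ i
    rw [← hw, wordPerm_replicate, mem_nucleus_iff]
    split_ifs
    exacts [.inl rfl, .inr ⟨l, rfl⟩]
  | step w ih₀ ih₁ =>
    by_cases hN : (g : Perm V) ∈ nucleus
    · exact hF.apply_eq_parity_of_mem_nucleus hw hN i
    rw [(hF i g).2.2 hN ⟨_, wordPerm_mem_G (wordState w false)⟩
        ⟨_, wordPerm_mem_G (wordState w true)⟩
        (hw ▸ hasState_wordState w false) (hw ▸ hasState_wordState w true),
      ih₀ rfl, ih₁ rfl, ← parity_wordState]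

theorem _root_.XiSpec.eq_xi {F : Fin 3 → G → ZMod 2} (hF : XiSpec F) : F = xi := by
  funext i g
  obtain ⟨w, hw⟩ := exists_wordPerm_eq g.2
  rw [hF.apply_eq_parity hw, xi_eq_parity hw]

end TwistedTwin

/-- **Lemma.** The functions `[b], [c], [d] : G → 𝔽₂` are well defined (the recursion
determines unique functions), and each is a group homomorphism to `(𝔽₂, +)`. -/
theorem stmt15 :
    (∃! F : Fin 3 → ↥G → ZMod 2, XiSpec F) ∧
    (∀ F : Fin 3 → ↥G → ZMod 2, XiSpec F →
      ∀ (i : Fin 3) (g h : ↥G), F i (g * h) = F i g + F i h) :=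
  ⟨⟨TwistedTwin.xi, TwistedTwin.xiSpec_xi, fun _ hF => hF.eq_xi⟩,
    fun _ hF i g h => hF.eq_xi ▸ TwistedTwin.xi_mul i g h⟩
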